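/- arXiv:1504.04806 — 3 statements merged into one kernel-verified Lean document; each statement's English description precedes it below -/
import Mathlib

section
/- Let D be a K-GIC digraph with inner vertex set V_I and out-arborescences {T_i : i ∈ V_I}. For a vertex v with v ∈ V(T_i), v ∈ V(T_j) for distinct i, j ∈ V_I, and v ∉ V_I, let L_{T_i}(v) denote the set of leaf vertices of T_i reachable from v by a directed path in T_i, and similarly L_{T_j}(v). Then L_{T_i}(v) ⊆ V_I \ {i, j} and L_{T_j}(v) ⊆ V_I \ {i, j}; in particular j ∉ L_{T_i}(v) and i ∉ L_{T_j}(v). -/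
open Finset

/-- A digraph: a finite vertex set together with an arc set with no self-loops. -/
structure Digr (V : Type) where
  verts : Finset V
  arcs : Finset (V × V)
  arcs_sub : ∀ a ∈ arcs, a.1 ∈ verts ∧ a.2 ∈ verts
  no_loops : ∀ a ∈ arcs, a.1 ≠ a.2

variable {V : Type} [DecidableEq V]

namespace Digr

/-- Out-neighborhood of `v`. -/
def outNbr (D : Digr V) (v : V) : Finset V :=
  (D.arcs.filter (fun a => a.1 = v)).image Prod.snd

/-- A directed path: a nonempty list of distinct vertices of `D` with an arc between
each consecutive pair. -/
def IsPath (D : Digr V) (p : List V) : Prop :=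
  p ≠ [] ∧ p.Nodup ∧ (∀ v ∈ p, v ∈ D.verts) ∧ p.Chain' (fun u w => (u, w) ∈ D.arcs)

/-- A directed cycle: a directed path whose last vertex has an arc back to the first. -/
def IsCycle (D : Digr V) (p : List V) : Prop :=
  D.IsPath p ∧ ∃ a b, p.head? = some a ∧ p.getLast? = some b ∧ (b, a) ∈ D.arcs

/-- An out-arborescence rooted at `r`: every vertex is reachable from the root by
exactly one directed path. -/
def IsOutArb (T : Digr V) (r : V) : Prop :=
  r ∈ T.verts ∧ ∀ v ∈ T.verts,
    ∃! p : List V, T.IsPath p ∧ p.head? = some r ∧ p.getLast? = some v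

/-- The leaves of a digraph: vertices with no out-neighbors. -/
def leaves (T : Digr V) : Finset V :=
  T.verts.filter (fun v => T.outNbr v = ∅)

/-- `T` is a sub-digraph of `D`. -/
def Sub (T D : Digr V) : Prop :=
  T.verts ⊆ D.verts ∧ T.arcs ⊆ D.arcs

/-- A P-path from `i` to `j` (w.r.t. inner vertex set `VI`): a directed path whose first
and last vertices are the distinct inner vertices `i` and `j` and all of whose other
vertices lie outside `VI`. -/
def IsPPathFromTo (D : Digr V) (VI : Finset V) (i j : V) (p : List V) : Prop :=
  D.IsPath p ∧ p.head? = some i ∧ p.getLast? = some j ∧ i ∈ VI ∧ j ∈ VI ∧ i ≠ j ∧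
    ∀ v ∈ (p.drop 1).dropLast, v ∉ VI

/-- `D` is a GIC digraph with inner vertex set `VI` and out-arborescences `T i` (`i ∈ VI`):
each `T i` is a sub-digraph of `D` that is an out-arborescence rooted at `i` with leaf set
exactly `VI \ {i}`; `D` is the union of the `T i`; `D` has no I-cycle (no directed cycle
containing exactly one inner vertex); and for every ordered pair of distinct inner vertices
there is exactly one P-path between them. -/
def IsGIC (D : Digr V) (VI : Finset V) (T : V → Digr V) : Prop :=
  VI ⊆ D.verts ∧
  (∀ i ∈ VI, (T i).Sub D ∧ (T i).IsOutArb i ∧ (T i).leaves = VI.erase i) ∧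
  D.verts = VI.biUnion (fun i => (T i).verts) ∧
  D.arcs = VI.biUnion (fun i => (T i).arcs) ∧
  (∀ c : List V, D.IsCycle c → (c.toFinset ∩ VI).card ≠ 1) ∧
  (∀ i ∈ VI, ∀ j ∈ VI, i ≠ j → ∃! p : List V, D.IsPPathFromTo VI i j p)

/-- The sub-digraph of `D` induced on `U`. -/
def induced (D : Digr V) (U : Finset V) : Digr V where
  verts := D.verts ∩ U
  arcs := D.arcs.filter (fun a => a.1 ∈ U ∧ a.2 ∈ U)
  arcs_sub := by
    intro a ha
    rw [Finset.mem_filter] at ha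
    have h := D.arcs_sub a ha.1
    exact ⟨Finset.mem_inter.2 ⟨h.1, ha.2.1⟩, Finset.mem_inter.2 ⟨h.2, ha.2.2⟩⟩
  no_loops := by
    intro a ha
    rw [Finset.mem_filter] at ha
    exact D.no_loops a ha.1

/-- A digraph is acyclic if it has no directed cycle. -/
def Acyclic (D : Digr V) : Prop := ∀ c : List V, ¬ D.IsCycle c

/-- The maximum number of vertices of an acyclic induced sub-digraph of `D`. -/
noncomputable def MAIS (D : Digr V) : ℕ :=
  letI := Classical.propDecidable
  ((D.verts.powerset).filter (fun U => (D.induced U).Acyclic)).sup Finset.card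

end Digr

/-- A valid index code for `D`: an encoding map `F` such that every receiver `i ∈ V(D)`
can decode its message `x i` from `F x` and its side information `{x j : j ∈ N⁺_D(i)}`. -/
def IsValidCode {M C : Type} (D : Digr V) (F : (V → M) → C) : Prop :=
  ∀ x x' : V → M, F x = F x' →
    ∀ i ∈ D.verts, (∀ j ∈ D.outNbr i, x j = x' j) → x i = x' i


/-!
Suppose a path of `T i` leads from `v` to `j`, and let `q` be the path of `T j` from `j` to `v`.
Every inner vertex of `T i` other than `i` is a leaf, hence can only end a path; and `i` can only
begin one, since an arc into `i` would close, with the tree path from `i`, a cycle whose only inner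
vertex is `i`. So `j` is the only inner vertex on both paths, and the closed walk `q` followed by
the path back to `j` contains a cycle through `j` with no other inner vertex, an I-cycle.
-/

namespace List.IsChain

variable {α : Type} {R : α → α → Prop} {l : List α} {x : α}

theorem exists_rel_of_mem_of_getLast?_ne (hl : IsChain R l) (hx : x ∈ l)
    (hlast : l.getLast? ≠ some x) : ∃ y, R x y := by
  obtain ⟨s, t, rfl⟩ := List.append_of_mem hx
  cases t with
  | nil => simp at hlast
  | cons y t => exact ⟨y, by simpa using hl.infix (l₁ := [x, y]) ⟨s, t, by simp⟩⟩

theorem exists_rel_of_mem_of_head?_ne (hl : IsChain R l) (hx : x ∈ l)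
    (hhead : l.head? ≠ some x) : ∃ y, R y x := by
  obtain ⟨s, t, rfl⟩ := List.append_of_mem hx
  rcases List.eq_nil_or_concat s with rfl | ⟨s, y, rfl⟩
  · simp at hhead
  · exact ⟨y, by simpa using hl.infix (l₁ := [y, x]) ⟨s, t, by simp⟩⟩

end List.IsChain

namespace Digr

variable {D T : Digr V} {p q c : List V} {a b x y : V}

theorem not_mem_arcs_of_mem_leaves (hx : x ∈ T.leaves) : (x, y) ∉ T.arcs := by
  intro hxy
  have hy : y ∈ T.outNbr x := Finset.mem_image.mpr ⟨(x, y), Finset.mem_filter.mpr ⟨hxy, rfl⟩, rfl⟩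
  simp [(Finset.mem_filter.mp hx).2] at hy

theorem IsPath.getLast?_eq_of_mem_leaves (hp : T.IsPath p) (hx : x ∈ p)
    (hleaf : x ∈ T.leaves) : p.getLast? = some x := by
  by_contra hlast
  obtain ⟨y, hxy⟩ := hp.2.2.2.exists_rel_of_mem_of_getLast?_ne hx hlast
  exact not_mem_arcs_of_mem_leaves hleaf hxy

omit [DecidableEq V] in
theorem IsPath.mono (hTD : T.Sub D) (hp : T.IsPath p) : D.IsPath p :=
  ⟨hp.1, hp.2.1, fun x hx => hTD.1 (hp.2.2.1 x hx), hp.2.2.2.imp fun _ _ h => hTD.2 h⟩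

omit [DecidableEq V] in
theorem isCycle_cons (hnd : (a :: c).Nodup) (hverts : ∀ x ∈ a :: c, x ∈ D.verts)
    (hchain : (a :: c ++ [a]).IsChain fun u w => (u, w) ∈ D.arcs) : D.IsCycle (a :: c) := by
  obtain ⟨hc, -, hclose⟩ := List.isChain_append.mp hchain
  obtain ⟨z, hz⟩ := Option.isSome_iff_exists.mp (List.getLast?_isSome.mpr (List.cons_ne_nil a c))
  exact ⟨⟨List.cons_ne_nil a c, hnd, hverts, hc⟩, a, z, rfl, hz, hclose z hz a rfl⟩

theorem exists_isCycle_of_isPath (hq : D.IsPath q) (hqh : q.head? = some a)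
    (hql : q.getLast? = some b) (hp : D.IsPath p) (hph : p.head? = some b)
    (hpl : p.getLast? = some a) (hab : a ≠ b) :
    ∃ c, D.IsCycle c ∧ a ∈ c ∧ ∀ x ∈ c, x ∈ q ∨ x ∈ p := by
  obtain ⟨r, rfl⟩ := List.head?_eq_some_iff.mp hqh
  obtain ⟨p₀, rfl⟩ := List.getLast?_eq_some_iff.mp hpl
  have har : a ∉ r := (List.nodup_cons.mp hq.2.1).1
  have hbr : b ∈ r := by
    simpa [hab.symm] using List.mem_of_getLast? hql
  have hbp : b ∈ p₀ ++ [a] := List.mem_of_mem_head? hph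
  -- `u` is the first vertex of `r` that lies on `p`
  obtain ⟨u, hu⟩ := Option.isSome_iff_exists.mp
    (List.find?_isSome (p := fun x => decide (x ∈ p₀ ++ [a])) |>.mpr ⟨b, hbr, by simpa using hbp⟩)
  obtain ⟨hup, s, r', rfl, hs⟩ := List.find?_eq_some_iff_append.mp hu
  have hup₀ : u ∈ p₀ := by
    have : u ≠ a := fun h => har (by simp [h])
    simpa [this] using hup
  obtain ⟨t, t', rfl⟩ := List.append_of_mem hup₀
  have hcqp : ∀ x ∈ a :: (s ++ u :: t'), x ∈ a :: (s ++ u :: r') ∨ x ∈ t ++ u :: t' ++ [a] := by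
    intro x hx
    simp only [List.mem_cons, List.mem_append] at hx ⊢
    grind
  refine ⟨_, isCycle_cons ?_ (fun x hx => (hcqp x hx).elim (hq.2.2.1 x) (hp.2.2.1 x)) ?_,
    List.mem_cons_self, hcqp⟩
  · have hqnd := hq.2.1
    have hpnd := hp.2.1
    simp only [List.nodup_cons, List.nodup_append, List.mem_append, List.mem_cons]
      at hqnd hpnd ⊢
    simp only [Bool.not_eq_eq_eq_not, Bool.not_true, decide_eq_false_iff_not, List.mem_append,
      List.mem_cons] at hs
    grind
  · have h₁ : (a :: s ++ [u]).IsChain fun u w => (u, w) ∈ D.arcs :=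
      hq.2.2.2.infix ⟨[], r', by simp⟩
    have h₂ : ([u] ++ (t' ++ [a])).IsChain fun u w => (u, w) ∈ D.arcs :=
      hp.2.2.2.infix ⟨t, [], by simp⟩
    simpa using h₁.append_overlap h₂ (List.cons_ne_nil u [])

namespace IsGIC

variable {VI : Finset V} {T : V → Digr V} {i j v w : V}

theorem not_isCycle_of_forall_inner_eq (hGIC : D.IsGIC VI T) (ha : a ∈ c) (haVI : a ∈ VI)
    (hinner : ∀ x ∈ c, x ∈ VI → x = a) : ¬ D.IsCycle c := by
  intro hc
  have hcap : c.toFinset ∩ VI = {a} := by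
    ext x
    simp only [Finset.mem_inter, List.mem_toFinset, Finset.mem_singleton]
    exact ⟨fun ⟨hx, hxVI⟩ => hinner x hx hxVI, by rintro rfl; exact ⟨ha, haVI⟩⟩
  exact hGIC.2.2.2.2.1 c hc (by simp [hcap])

theorem not_mem_arcs_root (hGIC : D.IsGIC VI T) (hi : i ∈ VI) : (w, i) ∉ (T i).arcs := by
  intro hwi
  obtain ⟨hsub, ⟨-, harb⟩, hleaves⟩ := hGIC.2.1 i hi
  have hwi_ne : w ≠ i := (T i).no_loops _ hwi
  have hleaf : ∀ {x}, x ∈ VI → x ≠ i → x ∈ (T i).leaves := fun hx hxi => by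
    rw [hleaves]; exact Finset.mem_erase.mpr ⟨hxi, hx⟩
  by_cases hwVI : w ∈ VI
  · exact not_mem_arcs_of_mem_leaves (hleaf hwVI hwi_ne) hwi
  obtain ⟨R, ⟨hR, hRh, hRl⟩, -⟩ := harb w ((T i).arcs_sub _ hwi).1
  refine hGIC.not_isCycle_of_forall_inner_eq (List.mem_of_mem_head? hRh) hi ?_
    ⟨hR.mono hsub, i, w, hRh, hRl, hsub.2 hwi⟩
  intro x hx hxVI
  by_contra hxi
  have := hR.getLast?_eq_of_mem_leaves hx (hleaf hxVI hxi)
  exact hwVI (Option.some.inj (hRl.symm.trans this) ▸ hxVI)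

theorem head?_or_getLast?_of_mem_inner (hGIC : D.IsGIC VI T) (hi : i ∈ VI)
    (hp : (T i).IsPath p) (hw : w ∈ p) (hwVI : w ∈ VI) :
    p.head? = some w ∨ p.getLast? = some w := by
  by_cases hwi : w = i
  · subst hwi
    by_contra! h
    obtain ⟨u, hu⟩ := hp.2.2.2.exists_rel_of_mem_of_head?_ne hw h.1
    exact hGIC.not_mem_arcs_root hi hu
  · have hleaf : w ∈ (T i).leaves := by
      rw [(hGIC.2.1 i hi).2.2]; exact Finset.mem_erase.mpr ⟨hwi, hwVI⟩
    exact Or.inr (hp.getLast?_eq_of_mem_leaves hw hleaf)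

theorem getLast?_ne_of_isPath (hGIC : D.IsGIC VI T) (hi : i ∈ VI) (hj : j ∈ VI)
    (hvj : v ∈ (T j).verts) (hv : v ∉ VI) (hp : (T i).IsPath p) (hph : p.head? = some v) :
    p.getLast? ≠ some j := by
  intro hpl
  obtain ⟨q, ⟨hq, hqh, hql⟩, -⟩ := (hGIC.2.1 j hj).2.1.2 v hvj
  have hvj_ne : j ≠ v := fun h => hv (h ▸ hj)
  obtain ⟨c, hc, hjc, hcqp⟩ := exists_isCycle_of_isPath (hq.mono (hGIC.2.1 j hj).1) hqh hql
    (hp.mono (hGIC.2.1 i hi).1) hph hpl hvj_ne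
  refine hGIC.not_isCycle_of_forall_inner_eq hjc hj (fun x hx hxVI => ?_) hc
  rcases hcqp x hx with hxq | hxp
  · rcases hGIC.head?_or_getLast?_of_mem_inner hj hq hxq hxVI with h | h
    · exact Option.some.inj (h.symm.trans hqh)
    · exact absurd (Option.some.inj (h.symm.trans hql) ▸ hxVI) hv
  · rcases hGIC.head?_or_getLast?_of_mem_inner hi hp hxp hxVI with h | h
    · exact absurd (Option.some.inj (h.symm.trans hph) ▸ hxVI) hv
    · exact Option.some.inj (h.symm.trans hpl)

theorem mem_leaves_erase_of_isPath {l : V} (hGIC : D.IsGIC VI T) (hi : i ∈ VI) (hj : j ∈ VI)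
    (hvj : v ∈ (T j).verts) (hv : v ∉ VI) (hl : l ∈ (T i).leaves)
    (hp : ∃ p, (T i).IsPath p ∧ p.head? = some v ∧ p.getLast? = some l) :
    l ∈ VI ∧ l ≠ i ∧ l ≠ j := by
  obtain ⟨p, hp, hph, hpl⟩ := hp
  rw [(hGIC.2.1 i hi).2.2, Finset.mem_erase] at hl
  exact ⟨hl.2, hl.1, fun hlj => hGIC.getLast?_ne_of_isPath hi hj hvj hv hp hph (hlj ▸ hpl)⟩

end IsGIC

end Digr

theorem stmt1_general (D : Digr V) (VI : Finset V) (T : V → Digr V)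
    (hGIC : D.IsGIC VI T)
    (i j : V) (hi : i ∈ VI) (hj : j ∈ VI)
    (v : V) (hvi : v ∈ (T i).verts) (hvj : v ∈ (T j).verts) (hv : v ∉ VI) :
    (∀ l ∈ (T i).leaves,
        (∃ p : List V, (T i).IsPath p ∧ p.head? = some v ∧ p.getLast? = some l) →
        l ∈ VI ∧ l ≠ i ∧ l ≠ j) ∧
    (∀ l ∈ (T j).leaves,
        (∃ p : List V, (T j).IsPath p ∧ p.head? = some v ∧ p.getLast? = some l) →
        l ∈ VI ∧ l ≠ i ∧ l ≠ j) := by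
  refine ⟨fun l hl hp => hGIC.mem_leaves_erase_of_isPath hi hj hvj hv hl hp,
    fun l hl hp => ?_⟩
  obtain ⟨hlVI, hlj, hli⟩ := hGIC.mem_leaves_erase_of_isPath hj hi hvi hv hl hp
  exact ⟨hlVI, hli, hlj⟩

/-- Lemma 2: for a common non-inner vertex `v` of two trees `T i`, `T j` of a GIC digraph,
the leaves of `T i` (resp. `T j`) reachable from `v` by a directed path in the tree all lie
in `V_I \ {i, j}`; in particular `j` (resp. `i`) is not among them. -/
theorem stmt1 (D : Digr V) (VI : Finset V) (T : V → Digr V) (K : ℕ)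
    (hGIC : D.IsGIC VI T) (hK : VI.card = K)
    (i j : V) (hi : i ∈ VI) (hj : j ∈ VI) (hij : i ≠ j)
    (v : V) (hvi : v ∈ (T i).verts) (hvj : v ∈ (T j).verts) (hv : v ∉ VI) :
    (∀ l ∈ (T i).leaves,
        (∃ p : List V, (T i).IsPath p ∧ p.head? = some v ∧ p.getLast? = some l) →
        l ∈ VI ∧ l ≠ i ∧ l ≠ j) ∧
    (∀ l ∈ (T j).leaves,
        (∃ p : List V, (T j).IsPath p ∧ p.head? = some v ∧ p.getLast? = some l) →
        l ∈ VI ∧ l ≠ i ∧ l ≠ j) :=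
  stmt1_general D VI T hGIC i j hi hj v hvi hvj hv
end

section
/- Let D be an ICC digraph with inner vertex set V_I = {v^1_{n_1}, …, v^k_{n_k}} (the last vertices of the k disjoint paths). Then D contains no I-cycle, i.e., no directed cycle of D contains exactly one vertex of V_I. -/
open Finset

variable {V : Type} [DecidableEq V]

/-- The set of arcs along a list of vertices (consecutive pairs). -/
def listArcs (p : List V) : Finset (V × V) := (p.zip p.tail).toFinset

/-- `D` is an ICC digraph with `k ≥ 2` vertex-disjoint directed paths `P i` (with first
vertex `firstv i` and last vertex `lastv i`), connecting paths with internal-vertex lists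
`Q i j` ending at a vertex `tgt i j` of `P j`, all these vertex sets mutually disjoint and
together comprising `V(D)`, the arcs of `D` being exactly the arcs along these paths, and
each first vertex having in-degree at least one. -/
structure IsICC (D : Digr V) (k : ℕ) (P : Fin k → List V)
    (Q : Fin k → Fin k → List V) (tgt : Fin k → Fin k → V)
    (firstv lastv : Fin k → V) : Prop where
  two_le : 2 ≤ k
  head_eq : ∀ i, (P i).head? = some (firstv i)
  last_eq : ∀ i, (P i).getLast? = some (lastv i)
  path_P : ∀ i, D.IsPath (P i)
  disj_P : ∀ i j, i ≠ j → ∀ v ∈ P i, v ∉ P j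
  conn_path : ∀ i j, i ≠ j → D.IsPath (lastv i :: (Q i j ++ [tgt i j]))
  tgt_mem : ∀ i j, i ≠ j → tgt i j ∈ P j
  disj_QP : ∀ i j, i ≠ j → ∀ v ∈ Q i j, ∀ m, v ∉ P m
  disj_QQ : ∀ i j i' j', i ≠ j → i' ≠ j' → (i, j) ≠ (i', j') → ∀ v ∈ Q i j, v ∉ Q i' j'
  verts_eq : D.verts = (Finset.univ.biUnion fun i => (P i).toFinset) ∪
      (Finset.univ.biUnion fun p : Fin k × Fin k =>
        if p.1 ≠ p.2 then (Q p.1 p.2).toFinset else ∅)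
  arcs_eq : D.arcs = (Finset.univ.biUnion fun i => listArcs (P i)) ∪
      (Finset.univ.biUnion fun p : Fin k × Fin k =>
        if p.1 ≠ p.2 then listArcs (lastv p.1 :: (Q p.1 p.2 ++ [tgt p.1 p.2])) else ∅)
  indeg : ∀ j, ∃ u ∈ D.verts, (u, firstv j) ∈ D.arcs

/-!
Label every vertex of `P j`, and every internal vertex of a connecting path `P_{i,j}`, by `j`.
An arc leaving a non-inner vertex stays on its path `P_j` or runs along `P_{i,j}` into `P_j`,
so it preserves the label; an arc leaving the inner vertex `v^i_{n_i}` starts some `P_{i,j}`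
with `j ≠ i`, so it changes the label. Around a cycle through exactly one inner vertex the
label would change exactly once and still return to its initial value.
-/

namespace List

variable {α β : Type*}

theorem mem_of_pair_infix_cons {u w x : α} {l : List α} (h : [u, w] <:+: x :: l) : w ∈ l := by
  rcases infix_cons_iff.1 h with ⟨t, ht⟩ | h
  · simp only [cons_append, nil_append, cons.injEq] at ht
    simp [← ht.2]
  · exact h.subset (by simp)

theorem mem_of_pair_infix_concat {u w y : α} {l : List α} (h : [u, w] <:+: l ++ [y]) :
    u ∈ l := by
  simpa using mem_of_pair_infix_cons (x := y) (l := l.reverse) (u := w) (w := u)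
    (by simpa using reverse_infix.2 h)

theorem pair_infix_of_mem_zip_tail : ∀ {l : List α} {u w : α}, (u, w) ∈ l.zip l.tail →
    [u, w] <:+: l
  | [], _, _, h => by simp at h
  | [_], _, _, h => by simp at h
  | x :: y :: r, u, w, h => by
    rw [tail_cons, zip_cons_cons, mem_cons, Prod.mk.injEq] at h
    rcases h with ⟨rfl, rfl⟩ | h
    · exact ⟨[], r, rfl⟩
    · exact (pair_infix_of_mem_zip_tail h).trans (infix_cons (infix_refl _))

theorem IsChain.cons_append_singleton_of_mem {R : α → α → Prop} {c : List α}
    (hc : IsChain R c) (hclose : ∀ a ∈ c.head?, ∀ b ∈ c.getLast?, R b a) {v : α}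
    (hv : v ∈ c) : ∃ l, v :: l ~ c ∧ IsChain R (v :: (l ++ [v])) := by
  obtain ⟨l₁, l₂, rfl⟩ := append_of_mem hv
  refine ⟨l₂ ++ l₁, (perm_append_comm.cons v).trans perm_middle.symm, ?_⟩
  have hne : l₁ ++ v :: l₂ ≠ [] := by simp
  have hcyc : Cycle.Chain R (l₁ ++ v :: l₂ : List α) :=
    (Cycle.chain_ne_nil R hne).2 <| hc.cons_of_ne_nil hne <|
      hclose _ (head?_eq_some_head hne) _ (getLast?_eq_some_getLast hne)
  rwa [Cycle.coe_eq_coe.2 isRotated_append, cons_append, Cycle.chain_coe_cons] at hcyc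

theorem apply_eq_of_isChain {R : α → α → Prop} {p : α → Prop} {f : α → β}
    (hf : ∀ u w, R u w → p u → f w = f u) :
    ∀ {a b : α} {l : List α}, IsChain R (a :: (l ++ [b])) → (∀ x ∈ a :: l, p x) → f b = f a
  | a, b, [], h, hp => hf a b (isChain_pair.1 h) (hp a mem_cons_self)
  | a, b, y :: l, h, hp => by
    rw [cons_append, isChain_cons_cons] at h
    rw [apply_eq_of_isChain hf h.2 fun x hx => hp x (mem_cons_of_mem a hx),
      hf a y h.1 (hp a mem_cons_self)]

end List

namespace Digr

theorem IsCycle.card_inter_ne_one {β : Type*} {D : Digr V} {c : List V} (hc : D.IsCycle c)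
    (S : Finset V) (f : V → β)
    (hstay : ∀ u w, (u, w) ∈ D.arcs → u ∉ S → f w = f u)
    (hleave : ∀ u w, (u, w) ∈ D.arcs → u ∈ S → f w ≠ f u) :
    (c.toFinset ∩ S).card ≠ 1 := by
  intro hcard
  obtain ⟨v, hv⟩ := card_eq_one.1 hcard
  have hvS : v ∈ c ∧ v ∈ S := by simpa using hv.ge (mem_singleton_self v)
  obtain ⟨⟨-, hnd, -, hch⟩, a, b, ha, hb, hba⟩ := hc
  obtain ⟨l, hperm, hrot⟩ :=
    hch.cons_append_singleton_of_mem (by simp_all) hvS.1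
  have hl : ∀ x ∈ l, x ∉ S := by
    intro x hx hxS
    have hxcS : x ∈ c.toFinset ∩ S :=
      mem_inter.2 ⟨List.mem_toFinset.2 (hperm.subset (List.mem_cons_of_mem v hx)), hxS⟩
    have hxv : x = v := by simpa [hv] using hxcS
    exact (List.nodup_cons.1 (hperm.nodup_iff.2 hnd)).1 (hxv ▸ hx)
  cases l with
  | nil => exact hleave v v (List.isChain_pair.1 hrot) hvS.2 rfl
  | cons y l =>
    rw [List.cons_append, List.isChain_cons_cons] at hrot
    exact hleave v y hrot.1 hvS.2 (List.apply_eq_of_isChain hstay hrot.2 hl).symm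

end Digr

/-- The label of the header: a singleton `{j}` for every vertex of an ICC digraph, kept as a
set so that no index has to be chosen. -/
def iccBranch {k : ℕ} (P : Fin k → List V) (Q : Fin k → Fin k → List V) (v : V) : Set (Fin k) :=
  {j | v ∈ P j ∨ ∃ i, i ≠ j ∧ v ∈ Q i j}

namespace IsICC

variable {D : Digr V} {k : ℕ} {P : Fin k → List V} {Q : Fin k → Fin k → List V}
  {tgt : Fin k → Fin k → V} {firstv lastv : Fin k → V}

theorem iccBranch_eq_of_mem_P (hICC : IsICC D k P Q tgt firstv lastv) {v : V} {j : Fin k}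
    (hv : v ∈ P j) : iccBranch P Q v = {j} := by
  ext m
  refine ⟨?_, fun hm => Or.inl (hm ▸ hv)⟩
  rintro (hm | ⟨i, him, hm⟩)
  · by_contra hmj
    exact hICC.disj_P m j hmj v hm hv
  · exact absurd hv (hICC.disj_QP i m him v hm j)

theorem iccBranch_eq_of_mem_Q (hICC : IsICC D k P Q tgt firstv lastv) {v : V} {i j : Fin k}
    (hij : i ≠ j) (hv : v ∈ Q i j) : iccBranch P Q v = {j} := by
  ext m
  refine ⟨?_, fun hm => Or.inr ⟨i, hm ▸ hij, hm ▸ hv⟩⟩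
  rintro (hm | ⟨i', him, hm⟩)
  · exact absurd hm (hICC.disj_QP i j hij v hv m)
  · by_contra hmj
    exact hICC.disj_QQ i j i' m hij him (by simp [Ne.symm hmj]) v hv hm

theorem lastv_mem (hICC : IsICC D k P Q tgt firstv lastv) (i : Fin k) : lastv i ∈ P i :=
  List.mem_of_mem_getLast? (hICC.last_eq i)

theorem lastv_injective (hICC : IsICC D k P Q tgt firstv lastv) : Function.Injective lastv := by
  intro i i' h
  by_contra hii
  exact hICC.disj_P i i' hii _ (hICC.lastv_mem i) (h ▸ hICC.lastv_mem i')

theorem arc_cases (hICC : IsICC D k P Q tgt firstv lastv) {u w : V} (h : (u, w) ∈ D.arcs) :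
    (∃ m, [u, w] <:+: P m) ∨ ∃ i j, i ≠ j ∧ [u, w] <:+: lastv i :: (Q i j ++ [tgt i j]) := by
  rw [hICC.arcs_eq, mem_union, mem_biUnion, mem_biUnion] at h
  rcases h with ⟨m, -, hm⟩ | ⟨⟨i, j⟩, -, hij⟩
  · exact Or.inl ⟨m, List.pair_infix_of_mem_zip_tail (List.mem_toFinset.1 hm)⟩
  · by_cases hne : i = j
    · simp [hne] at hij
    · rw [if_pos hne] at hij
      exact Or.inr ⟨i, j, hne, List.pair_infix_of_mem_zip_tail (List.mem_toFinset.1 hij)⟩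

theorem iccBranch_of_connecting_arc (hICC : IsICC D k P Q tgt firstv lastv) {u w : V}
    {i j : Fin k} (hij : i ≠ j) (h : [u, w] <:+: lastv i :: (Q i j ++ [tgt i j])) :
    iccBranch P Q w = {j} ∧ (u = lastv i ∨ u ∈ Q i j) := by
  refine ⟨?_, ?_⟩
  · rcases List.mem_append.1 (List.mem_of_pair_infix_cons h) with hw | hw
    · exact hICC.iccBranch_eq_of_mem_Q hij hw
    · rw [List.mem_singleton.1 hw]
      exact hICC.iccBranch_eq_of_mem_P (hICC.tgt_mem i j hij)
  · rw [← List.cons_append] at h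
    exact List.mem_cons.1 (List.mem_of_pair_infix_concat h)

theorem iccBranch_eq_of_arc (hICC : IsICC D k P Q tgt firstv lastv) {u w : V}
    (h : (u, w) ∈ D.arcs) (hu : ∀ i, u ≠ lastv i) : iccBranch P Q w = iccBranch P Q u := by
  rcases hICC.arc_cases h with ⟨m, hm⟩ | ⟨i, j, hij, hm⟩
  · rw [hICC.iccBranch_eq_of_mem_P (hm.subset (by simp)),
      hICC.iccBranch_eq_of_mem_P (hm.subset (by simp))]
  · obtain ⟨hw, hu' | hu'⟩ := hICC.iccBranch_of_connecting_arc hij hm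
    · exact absurd hu' (hu i)
    · rw [hw, hICC.iccBranch_eq_of_mem_Q hij hu']

theorem iccBranch_ne_of_arc_lastv (hICC : IsICC D k P Q tgt firstv lastv) {i : Fin k} {w : V}
    (h : (lastv i, w) ∈ D.arcs) : iccBranch P Q w ≠ iccBranch P Q (lastv i) := by
  rw [hICC.iccBranch_eq_of_mem_P (hICC.lastv_mem i)]
  rcases hICC.arc_cases h with ⟨m, hm⟩ | ⟨i', j, hij, hm⟩
  · obtain rfl : m = i := by
      by_contra hmi
      exact hICC.disj_P i m (Ne.symm hmi) _ (hICC.lastv_mem i) (hm.subset (by simp))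
    obtain ⟨l, hl⟩ := List.getLast?_eq_some_iff.1 (hICC.last_eq m)
    have hnd := (hICC.path_P m).2.1
    rw [hl] at hm hnd
    have hnotin : lastv m ∉ l := ((List.nodup_concat l _).1 (by simpa using hnd)).1
    exact absurd (List.mem_of_pair_infix_concat hm) hnotin
  · obtain ⟨hw, hu | hu⟩ := hICC.iccBranch_of_connecting_arc hij hm
    · rw [hw, hICC.lastv_injective hu]
      simpa using Ne.symm hij
    · exact absurd (hICC.lastv_mem i) (hICC.disj_QP i' j hij _ hu i)

end IsICC

/-- An ICC digraph has no I-cycle: no directed cycle contains exactly one vertex of the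
inner vertex set `V_I = {lastv i : i}` (the last vertices of the `k` disjoint paths). -/
theorem stmt9 (D : Digr V) (k : ℕ) (P : Fin k → List V)
    (Q : Fin k → Fin k → List V) (tgt : Fin k → Fin k → V)
    (firstv lastv : Fin k → V)
    (hICC : IsICC D k P Q tgt firstv lastv)
    (c : List V) (hc : D.IsCycle c) :
    (c.toFinset ∩ Finset.univ.image lastv).card ≠ 1 := by
  refine hc.card_inter_ne_one _ (iccBranch P Q) (fun u w h hu => ?_) (fun u w h hu => ?_)
  · exact hICC.iccBranch_eq_of_arc h fun i hi => hu (mem_image.2 ⟨i, mem_univ i, hi.symm⟩)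
  · obtain ⟨i, -, rfl⟩ := mem_image.1 hu
    exact hICC.iccBranch_ne_of_arc_lastv h
end

section
/- For every K ≥ 2, let D be the digraph with vertex set {1, …, 3K−2}, inner vertex set V_I = {1, …, K}, and arc set consisting exactly of: (1 → K+1); (K → 2K); for each i ∈ {2, …, K−1}, the arcs (i → K+i) and (i → 3K−i); the arcs (K+1 → j) for every j ∈ {2, …, K}; the arcs (2K → j) for every j ∈ {1, …, K−1}; and for each i ∈ {2, …, K−1}, the arcs (K+i → j) for every j ∈ {i+1, …, K} and (3K−i → j) for every j ∈ {1, …, i−1}. Then D is a K-GIC digraph with inner vertex set V_I, and hence for every t ≥ 1 there exists a valid index code for D of length 2K − 1 = (2N+1)/3 packets, where N = 3K−2. -/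
/-!
Every arc joins an inner vertex `i ≤ K` and an outer vertex, so the digraph is bipartite:
an I-cycle would be a 2-cycle, and a P-path from `i` to `j` has a single middle vertex,
`K + i` if `i < j` and `3K - i` if `i > j`. Take `T_i` to consist of the arcs leaving `i`
and its out-neighbours `K + i` and `3K - i`: every vertex of `T_i` other than `i` has one
in-neighbour there, which makes `T_i` an out-arborescence. The code sends the sum of all inner
messages and, for each outer vertex, its message plus the inner messages it does not know.
An inner receiver `i` recovers from the packets of `K + i` and `3K - i` the sums over
`1, …, i` and over `i, …, K`, which overlap exactly in `x_i`.
-/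

open Finset

variable {V : Type} [DecidableEq V]

namespace Digr

section

variable {α : Type} {D : Digr α}

theorem isPath_iff {p : List α} : D.IsPath p ↔
    p ≠ [] ∧ p.Nodup ∧ (∀ v ∈ p, v ∈ D.verts) ∧ p.IsChain (fun u w => (u, w) ∈ D.arcs) :=
  Iff.rfl

theorem isPath_singleton {a : α} (ha : a ∈ D.verts) : D.IsPath [a] := by
  simp [isPath_iff, ha]

theorem isPath_pair {a b : α} (hab : (a, b) ∈ D.arcs) : D.IsPath [a, b] := by
  have := D.arcs_sub _ hab
  simp_all [isPath_iff, D.no_loops _ hab]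

theorem isPath_triple {a b c : α} (hab : (a, b) ∈ D.arcs) (hbc : (b, c) ∈ D.arcs)
    (hac : a ≠ c) : D.IsPath [a, b, c] := by
  have := D.arcs_sub _ hab
  have := D.arcs_sub _ hbc
  simp_all [isPath_iff, D.no_loops _ hab, D.no_loops _ hbc]

theorem eq_of_isChain_of_unique_pred {R : α → α → Prop} {r : α}
    (hroot : ∀ u, ¬ R u r) (hpred : ∀ u u' w, R u w → R u' w → u = u') :
    ∀ {v : α} {l l' : List α}, (v :: l).IsChain (fun a b => R b a) →
      (v :: l').IsChain (fun a b => R b a) →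
      (v :: l).getLast? = some r → (v :: l').getLast? = some r → l = l'
  | v, [], [], _, _, _, _ => rfl
  | v, [], u :: _, _, hl', hr, _ => by
    simp only [List.getLast?_singleton, Option.some.injEq] at hr
    exact absurd (List.isChain_cons_cons.1 hl').1 (hr ▸ hroot u)
  | v, u :: _, [], hl, _, _, hr' => by
    simp only [List.getLast?_singleton, Option.some.injEq] at hr'
    exact absurd (List.isChain_cons_cons.1 hl).1 (hr' ▸ hroot u)
  | v, u :: l, u' :: l', hl, hl', hr, hr' => by
    rw [List.isChain_cons_cons] at hl hl'
    obtain rfl := hpred u u' v hl.1 hl'.1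
    rw [List.getLast?_cons_cons] at hr hr'
    rw [eq_of_isChain_of_unique_pred hroot hpred hl.2 hl'.2 hr hr']

theorem IsPath.eq_of_unique_pred {r v : α} {p q : List α}
    (hroot : ∀ u, (u, r) ∉ D.arcs)
    (hpred : ∀ u u' w, (u, w) ∈ D.arcs → (u', w) ∈ D.arcs → u = u')
    (hp : D.IsPath p) (hq : D.IsPath q) (hpr : p.head? = some r) (hqr : q.head? = some r)
    (hpv : p.getLast? = some v) (hqv : q.getLast? = some v) : p = q := by
  -- read backwards, a path from `r` is a chain of unique predecessors ending at `r`
  obtain ⟨ys, rfl⟩ := List.getLast?_eq_some_iff.1 hpv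
  obtain ⟨zs, rfl⟩ := List.getLast?_eq_some_iff.1 hqv
  have key (xs : List α) (hxs : D.IsPath (xs ++ [v])) (hr : (xs ++ [v]).head? = some r) :
      (v :: xs.reverse).IsChain (fun a b => (b, a) ∈ D.arcs) ∧
        (v :: xs.reverse).getLast? = some r := by
    have h := List.isChain_reverse.2 ((isPath_iff.1 hxs).2.2.2)
    rw [← List.getLast?_reverse] at hr
    simp_all
  obtain ⟨hys, hyr⟩ := key ys hp hpr
  obtain ⟨hzs, hzr⟩ := key zs hq hqr
  rw [List.reverse_injective (eq_of_isChain_of_unique_pred hroot hpred hys hzs hyr hzr)]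

def IsBipartite (D : Digr α) (S : Finset α) : Prop :=
  ∀ u w, (u, w) ∈ D.arcs → (u ∈ S ↔ w ∉ S)

theorem IsBipartite.eq_triple_of_isPPathFromTo {S : Finset α} {i j : α} {p : List α}
    (hD : D.IsBipartite S) (hp : D.IsPPathFromTo S i j p) :
    ∃ m, p = [i, m, j] ∧ (i, m) ∈ D.arcs ∧ (m, j) ∈ D.arcs := by
  obtain ⟨hpath, hi, hj, hiS, hjS, hij, hmid⟩ := hp
  obtain ⟨-, -, -, hch⟩ := isPath_iff.1 hpath
  rcases p with _ | ⟨_, _ | ⟨m, _ | ⟨v, _ | ⟨w, rest⟩⟩⟩⟩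
  · cases hi
  · cases Option.some.inj hi; cases Option.some.inj hj; exact absurd rfl hij
  · cases Option.some.inj hi; cases Option.some.inj hj
    exact absurd hjS ((hD _ _ (List.isChain_cons_cons.1 hch).1).1 hiS)
  · cases Option.some.inj hi; cases Option.some.inj hj
    simp only [List.isChain_cons_cons, List.isChain_singleton, and_true] at hch
    exact ⟨m, rfl, hch⟩
  · cases Option.some.inj hi
    simp only [List.isChain_cons_cons] at hch
    exact absurd ((hD _ _ hch.2.1).2 (hmid v (by simp))) ((hD _ _ hch.1).1 hiS)

theorem isPPathFromTo_triple {S : Finset α} {i m j : α} (hiS : i ∈ S) (hjS : j ∈ S)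
    (hij : i ≠ j) (hm : m ∉ S) (him : (i, m) ∈ D.arcs) (hmj : (m, j) ∈ D.arcs) :
    D.IsPPathFromTo S i j [i, m, j] :=
  ⟨isPath_triple him hmj hij, rfl, rfl, hiS, hjS, hij, by simpa using hm⟩

end

section

variable {α : Type} [DecidableEq α] {D : Digr α}

theorem mem_outNbr {u v : α} : u ∈ D.outNbr v ↔ (v, u) ∈ D.arcs := by
  simp [outNbr]

def outBall2 (D : Digr α) (r : α) : Digr α where
  verts := insert r ((D.arcs.filter fun a => a.1 = r ∨ (r, a.1) ∈ D.arcs).image Prod.snd)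
  arcs := D.arcs.filter fun a => a.1 = r ∨ (r, a.1) ∈ D.arcs
  arcs_sub a ha := by
    obtain ⟨ha, hr | hr⟩ := mem_filter.1 ha
    · exact ⟨hr ▸ mem_insert_self _ _, mem_insert_of_mem (mem_image_of_mem _ (by simp [ha, hr]))⟩
    · refine ⟨mem_insert_of_mem (mem_image.2 ⟨(r, a.1), by simp [hr], rfl⟩),
        mem_insert_of_mem (mem_image_of_mem _ (by simp [ha, hr]))⟩
  no_loops a ha := D.no_loops a (mem_filter.1 ha).1

variable {r : α}

theorem mem_outBall2_arcs {u w : α} :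
    (u, w) ∈ (D.outBall2 r).arcs ↔ (u, w) ∈ D.arcs ∧ (u = r ∨ (r, u) ∈ D.arcs) :=
  mem_filter

theorem mem_outBall2_verts {v : α} :
    v ∈ (D.outBall2 r).verts ↔ v = r ∨ ∃ u, (u, v) ∈ (D.outBall2 r).arcs := by
  simp [outBall2]

theorem outBall2_sub (hr : r ∈ D.verts) : (D.outBall2 r).Sub D := by
  refine ⟨fun v hv => ?_, filter_subset _ _⟩
  obtain rfl | ⟨u, hu⟩ := mem_outBall2_verts.1 hv
  · exact hr
  · exact (D.arcs_sub _ (mem_outBall2_arcs.1 hu).1).2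

theorem isOutArb_outBall2 (hswap : ∀ u, (r, u) ∈ D.arcs → (u, r) ∉ D.arcs)
    (hpred : ∀ u u' w, (u, w) ∈ (D.outBall2 r).arcs → (u', w) ∈ (D.outBall2 r).arcs → u = u') :
    (D.outBall2 r).IsOutArb r := by
  have hroot : ∀ u, (u, r) ∉ (D.outBall2 r).arcs := by
    rintro u hu
    obtain ⟨hur, rfl | hru⟩ := mem_outBall2_arcs.1 hu
    · exact D.no_loops _ hur rfl
    · exact hswap u hru hur
  refine ⟨mem_outBall2_verts.2 (Or.inl rfl), fun v hv => ?_⟩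
  have hpath : ∃ p, (D.outBall2 r).IsPath p ∧ p.head? = some r ∧ p.getLast? = some v := by
    obtain rfl | ⟨u, hu⟩ := mem_outBall2_verts.1 hv
    · exact ⟨[v], isPath_singleton hv, rfl, rfl⟩
    obtain ⟨huv, rfl | hru⟩ := mem_outBall2_arcs.1 hu
    · exact ⟨[u, v], isPath_pair hu, rfl, rfl⟩
    have hru' : (r, u) ∈ (D.outBall2 r).arcs := mem_outBall2_arcs.2 ⟨hru, Or.inl rfl⟩
    exact ⟨[r, u, v], isPath_triple hru' hu (by rintro rfl; exact hroot u hu), rfl, rfl⟩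
  obtain ⟨p, hp⟩ := hpath
  exact ⟨p, hp, fun q hq => hq.1.eq_of_unique_pred hroot hpred hp.1 hq.2.1 hp.2.1 hq.2.2 hp.2.2⟩

theorem IsBipartite.exists_two_cycle {S : Finset α} {c : List α} (hD : D.IsBipartite S)
    (hc : D.IsCycle c) (hcS : (c.toFinset ∩ S).card = 1) :
    ∃ a b, (a, b) ∈ D.arcs ∧ (b, a) ∈ D.arcs := by
  obtain ⟨hpath, a₀, z, hca, hcz, hza⟩ := hc
  obtain ⟨hne, hnd, -, hch⟩ := isPath_iff.1 hpath
  rcases c with _ | ⟨a, _ | ⟨b, _ | ⟨c, rest⟩⟩⟩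
  · exact absurd rfl hne
  · cases Option.some.inj hca; cases Option.some.inj hcz
    exact absurd rfl (D.no_loops _ hza)
  · cases Option.some.inj hca; cases Option.some.inj hcz
    exact ⟨_, _, (List.isChain_cons_cons.1 hch).1, hza⟩
  cases Option.some.inj hca
  simp only [List.isChain_cons_cons] at hch
  have hd : ∃ d ∈ a₀ :: b :: c :: rest, d ≠ b ∧ (c, d) ∈ D.arcs := by
    cases rest with
    | nil =>
      cases Option.some.inj hcz
      exact ⟨a₀, by simp, by simp_all, hza⟩
    | cons d _ =>
      refine ⟨d, by simp, ?_, (List.isChain_cons_cons.1 hch.2.2).1⟩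
      rintro rfl; simp at hnd
  obtain ⟨d, hdc, hdb, hcd⟩ := hd
  -- membership in `S` alternates along a cycle, so one on three or more vertices meets `S` twice
  suffices 1 < (List.toFinset (a₀ :: b :: c :: rest) ∩ S).card by omega
  rw [one_lt_card]
  by_cases ha : a₀ ∈ S
  · have hc : c ∈ S := by have := hD _ _ hch.1; have := hD _ _ hch.2.1; tauto
    exact ⟨a₀, by simp [ha], c, by simp [hc], by rintro rfl; simp at hnd⟩
  · have hb : b ∈ S := by have := hD _ _ hch.1; tauto
    have hdS : d ∈ S := by have := hD _ _ hch.2.1; have := hD _ _ hcd; tauto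
    exact ⟨b, by simp [hb], d, mem_inter.2 ⟨List.mem_toFinset.2 hdc, hdS⟩, hdb.symm⟩

end

end Digr

theorem Finset.sum_eq_sum_of_eqOn_sdiff {ι M : Type} [DecidableEq ι] [AddCancelCommMonoid M]
    {s u : Finset ι} {f g : ι → M} (hsu : s ⊆ u) (hu : ∑ j ∈ u, f j = ∑ j ∈ u, g j)
    (hfg : ∀ j ∈ u \ s, f j = g j) : ∑ j ∈ s, f j = ∑ j ∈ s, g j := by
  rw [← sum_sdiff hsu, ← sum_sdiff hsu (f := g), sum_congr rfl hfg] at hu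
  exact add_left_cancel hu

theorem Finset.eq_of_sum_eq_of_inter_eq_singleton {ι M : Type} [DecidableEq ι]
    [AddCancelCommMonoid M] {s t : Finset ι} {i : ι} {f g : ι → M} (hst : s ∩ t = {i})
    (hs : ∑ j ∈ s, f j = ∑ j ∈ s, g j) (ht : ∑ j ∈ t, f j = ∑ j ∈ t, g j)
    (hu : ∑ j ∈ s ∪ t, f j = ∑ j ∈ s ∪ t, g j) : f i = g i := by
  have hf := sum_union_inter (s₁ := s) (s₂ := t) (f := f)
  rw [hs, ht, ← sum_union_inter (f := g), ← hu, hst, sum_singleton, sum_singleton] at hf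
  exact add_left_cancel hf

namespace GICFamily

open Digr

-- The outer vertex `K + i` points to the inner vertices above `i`, and `3K - i` to those below `i`.
def Arc (K a b : ℕ) : Prop :=
  (1 ≤ a ∧ a < K ∧ b = K + a) ∨ (2 ≤ a ∧ a ≤ K ∧ b = 3 * K - a) ∨
  (K < a ∧ a < 2 * K ∧ a - K < b ∧ b ≤ K) ∨ (2 * K ≤ a ∧ a ≤ 3 * K - 2 ∧ 1 ≤ b ∧ b < 3 * K - a)

theorem mem_arcs_iff {K : ℕ} {D : Digr ℕ} (hK : 2 ≤ K)
    (harcs : ∀ a : ℕ × ℕ, a ∈ D.arcs ↔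
      ((a.1 = 1 ∧ a.2 = K + 1) ∨
       (a.1 = K ∧ a.2 = 2 * K) ∨
       (∃ i, 2 ≤ i ∧ i ≤ K - 1 ∧ a.1 = i ∧ (a.2 = K + i ∨ a.2 = 3 * K - i)) ∨
       (a.1 = K + 1 ∧ 2 ≤ a.2 ∧ a.2 ≤ K) ∨
       (a.1 = 2 * K ∧ 1 ≤ a.2 ∧ a.2 ≤ K - 1) ∨
       (∃ i, 2 ≤ i ∧ i ≤ K - 1 ∧ a.1 = K + i ∧ i + 1 ≤ a.2 ∧ a.2 ≤ K) ∨
       (∃ i, 2 ≤ i ∧ i ≤ K - 1 ∧ a.1 = 3 * K - i ∧ 1 ≤ a.2 ∧ a.2 ≤ i - 1)))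
    (a b : ℕ) : (a, b) ∈ D.arcs ↔ Arc K a b := by
  rw [harcs, Arc]
  constructor
  · rintro (h | h | ⟨i, h⟩ | h | h | ⟨i, h⟩ | ⟨i, h⟩) <;> dsimp only at h <;> omega
  · intro h
    by_cases hlo : a = 1 ∨ a = K ∨ a = K + 1 ∨ a = 2 * K
    · omega
    obtain ha | ha | ha : a ≤ K ∨ (K < a ∧ a < 2 * K) ∨ 2 * K ≤ a := by omega
    · exact .inr (.inr (.inl ⟨a, by omega, by omega, rfl, by omega⟩))
    · exact .inr (.inr (.inr (.inr (.inr (.inl ⟨a - K, by omega, by omega, by omega, by omega,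
        by omega⟩)))))
    · exact .inr (.inr (.inr (.inr (.inr (.inr ⟨3 * K - a, by omega, by omega, by omega,
        by omega, by omega⟩)))))

variable {K : ℕ} {D : Digr ℕ}

theorem isBipartite (hD : ∀ a b, (a, b) ∈ D.arcs ↔ Arc K a b) : D.IsBipartite (Icc 1 K) := by
  intro u w h
  rw [hD, Arc] at h
  simp only [mem_Icc]
  omega

theorem swap_notMem_arcs (hD : ∀ a b, (a, b) ∈ D.arcs ↔ Arc K a b) {a b : ℕ}
    (hab : (a, b) ∈ D.arcs) : (b, a) ∉ D.arcs := by
  rw [hD, Arc] at hab ⊢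
  omega

theorem middle_eq_ite (hD : ∀ a b, (a, b) ∈ D.arcs ↔ Arc K a b) {i m j : ℕ} (hi : i ≤ K)
    (him : (i, m) ∈ D.arcs) (hmj : (m, j) ∈ D.arcs) :
    m = if i < j then K + i else 3 * K - i := by
  rw [hD, Arc] at him hmj
  split_ifs <;> omega

theorem existsUnique_isPPathFromTo (hD : ∀ a b, (a, b) ∈ D.arcs ↔ Arc K a b) {i j : ℕ}
    (hi : i ∈ Icc 1 K) (hj : j ∈ Icc 1 K) (hij : i ≠ j) :
    ∃! p, D.IsPPathFromTo (Icc 1 K) i j p := by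
  obtain ⟨m, him, hmj⟩ : ∃ m, (i, m) ∈ D.arcs ∧ (m, j) ∈ D.arcs := by
    simp only [hD, Arc]
    rw [mem_Icc] at hi hj
    rcases lt_or_gt_of_ne hij with h | h
    · exact ⟨K + i, by omega⟩
    · exact ⟨3 * K - i, by omega⟩
  refine ⟨[i, m, j], isPPathFromTo_triple hi hj hij ((isBipartite hD _ _ him).1 hi) him hmj,
    fun q hq => ?_⟩
  obtain ⟨m', rfl, him', hm'j⟩ := (isBipartite hD).eq_triple_of_isPPathFromTo hq
  have hiK := (mem_Icc.1 hi).2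
  rw [middle_eq_ite hD hiK him' hm'j, middle_eq_ite hD hiK him hmj]

theorem mem_outBall2_verts_iff (hD : ∀ a b, (a, b) ∈ D.arcs ↔ Arc K a b) {i v : ℕ}
    (hi : i ∈ Icc 1 K) :
    v ∈ (D.outBall2 i).verts ↔ (1 ≤ v ∧ v ≤ K) ∨ (i < K ∧ v = K + i) ∨ (1 < i ∧ v = 3 * K - i) := by
  rw [mem_Icc] at hi
  simp only [mem_outBall2_verts, mem_outBall2_arcs, hD, Arc]
  constructor
  · rintro (rfl | ⟨u, hu⟩) <;> omega
  · intro hv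
    by_cases hvi : v = i
    · exact Or.inl hvi
    · refine Or.inr ⟨if v ≤ K then (if i < v then K + i else 3 * K - i) else i, ?_⟩
      split_ifs <;> omega

theorem eq_of_mem_outBall2_arcs (hD : ∀ a b, (a, b) ∈ D.arcs ↔ Arc K a b) {i : ℕ} (hi : i ≤ K)
    (u u' w : ℕ) (hu : (u, w) ∈ (D.outBall2 i).arcs) (hu' : (u', w) ∈ (D.outBall2 i).arcs) :
    u = u' := by
  simp only [mem_outBall2_arcs, hD, Arc] at hu hu'
  omega

theorem leaves_outBall2 (hK : 2 ≤ K) (hD : ∀ a b, (a, b) ∈ D.arcs ↔ Arc K a b) {i : ℕ}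
    (hi : i ∈ Icc 1 K) :
    (D.outBall2 i).leaves = (Icc 1 K).erase i := by
  ext v
  simp only [leaves, mem_filter, mem_erase, eq_empty_iff_forall_notMem, mem_outNbr,
    mem_outBall2_verts_iff hD hi, mem_outBall2_arcs, hD, Arc, mem_Icc]
  rw [mem_Icc] at hi
  constructor
  · rintro ⟨hv, hout⟩
    by_contra hvi
    refine hout (if v = i then (if i < K then K + i else 3 * K - i) else
      (if v < 2 * K then K else 1)) ?_
    split_ifs <;> omega
  · rintro ⟨hvi, hv⟩
    exact ⟨Or.inl hv, fun w => by omega⟩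

theorem verts_eq_biUnion (hD : ∀ a b, (a, b) ∈ D.arcs ↔ Arc K a b)
    (hverts : D.verts = Icc 1 (3 * K - 2)) :
    D.verts = (Icc 1 K).biUnion fun i => (D.outBall2 i).verts := by
  ext v
  simp only [hverts, mem_biUnion]
  constructor
  · intro hv
    rw [mem_Icc] at hv
    have hi : (if v ≤ K then v else if v < 2 * K then v - K else 3 * K - v) ∈ Icc 1 K := by
      rw [mem_Icc]; split_ifs <;> omega
    refine ⟨_, hi, (mem_outBall2_verts_iff hD hi).2 ?_⟩
    split_ifs <;> omega
  · rintro ⟨i, hi, hv⟩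
    rw [mem_outBall2_verts_iff hD hi] at hv
    rw [mem_Icc] at hi ⊢
    omega

theorem arcs_eq_biUnion (hD : ∀ a b, (a, b) ∈ D.arcs ↔ Arc K a b) :
    D.arcs = (Icc 1 K).biUnion fun i => (D.outBall2 i).arcs := by
  ext ⟨a, b⟩
  simp only [mem_biUnion, mem_outBall2_arcs]
  refine ⟨fun hab => ?_, fun ⟨_, _, hab, _⟩ => hab⟩
  refine ⟨if a ≤ K then a else if a < 2 * K then a - K else 3 * K - a, ?_, hab, ?_⟩ <;>
    rw [hD, Arc] at hab <;> simp only [mem_Icc, hD, Arc] <;> split_ifs <;> omega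

theorem isGIC (hK : 2 ≤ K) (hD : ∀ a b, (a, b) ∈ D.arcs ↔ Arc K a b)
    (hverts : D.verts = Icc 1 (3 * K - 2)) : D.IsGIC (Icc 1 K) D.outBall2 := by
  have hinner : Icc 1 K ⊆ D.verts := hverts ▸ Icc_subset_Icc_right (by omega)
  refine ⟨hinner, fun i hi => ⟨outBall2_sub (hinner hi), ?_, leaves_outBall2 hK hD hi⟩,
    verts_eq_biUnion hD hverts, arcs_eq_biUnion hD, fun c hc hcard => ?_,
    fun i hi j hj => existsUnique_isPPathFromTo hD hi hj⟩
  · exact isOutArb_outBall2 (fun _ => swap_notMem_arcs hD)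
      (eq_of_mem_outBall2_arcs hD (mem_Icc.1 hi).2)
  · obtain ⟨a, b, hab, hba⟩ := (isBipartite hD).exists_two_cycle hc hcard
    exact swap_notMem_arcs hD hab hba

def codeSupport (K k : ℕ) : Finset ℕ := if k < K then Icc 1 k else Icc (2 * K - k) K

/-- Packet `0` is the sum of the inner messages; packet `k ≥ 1` belongs to the outer vertex
`K + k` and adds to its message the inner messages that `K + k` does not know. -/
def code (K : ℕ) {M : Type} [AddCommMonoid M] (x : ℕ → M) (k : Fin (2 * K - 1)) : M :=
  if (k : ℕ) = 0 then ∑ j ∈ Icc 1 K, x j else x (K + k) + ∑ j ∈ codeSupport K k, x j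

theorem codeSupport_subset {k : ℕ} (hk : k < 2 * K) : codeSupport K k ⊆ Icc 1 K := by
  unfold codeSupport
  split_ifs <;> exact Icc_subset_Icc (by omega) (by omega)

theorem mem_arcs_of_mem_sdiff_codeSupport (hD : ∀ a b, (a, b) ∈ D.arcs ↔ Arc K a b) {k j : ℕ}
    (hk : k ∈ Icc 1 (2 * K - 2)) (hj : j ∈ Icc 1 K \ codeSupport K k) :
    (K + k, j) ∈ D.arcs := by
  rw [mem_Icc] at hk
  unfold codeSupport at hj
  rw [hD, Arc]
  split_ifs at hj <;> simp only [mem_sdiff, mem_Icc] at hj <;> omega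

section

variable {M : Type} [AddCommMonoid M] {x x' : ℕ → M}

theorem sum_eq_of_code_eq (hK : 1 ≤ K) (h : code K x = code K x') :
    ∑ j ∈ Icc 1 K, x j = ∑ j ∈ Icc 1 K, x' j := by
  simpa [code] using congrFun h ⟨0, by omega⟩

theorem packet_eq_of_code_eq (h : code K x = code K x') {k : ℕ} (hk : 1 ≤ k)
    (hk' : k < 2 * K - 1) :
    x (K + k) + ∑ j ∈ codeSupport K k, x j = x' (K + k) + ∑ j ∈ codeSupport K k, x' j := by
  simpa [code, show k ≠ 0 by omega] using congrFun h ⟨k, hk'⟩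

end

theorem isValidCode_code {M : Type} [AddCancelCommMonoid M] (hK : 2 ≤ K)
    (hD : ∀ a b, (a, b) ∈ D.arcs ↔ Arc K a b) (hverts : D.verts = Icc 1 (3 * K - 2)) :
    IsValidCode D (code K (M := M)) := by
  intro x x' hxx' v hv hside
  replace hside : ∀ j, (v, j) ∈ D.arcs → x j = x' j := fun j hj => hside j (mem_outNbr.2 hj)
  have hsum := sum_eq_of_code_eq (by omega) hxx'
  rw [hverts, mem_Icc] at hv
  by_cases hvK : v ≤ K
  · have hlo : ∑ j ∈ Icc 1 v, x j = ∑ j ∈ Icc 1 v, x' j := by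
      rcases eq_or_lt_of_le hvK with rfl | hlt
      · exact hsum
      have h := packet_eq_of_code_eq hxx' (k := v) (by omega) (by omega)
      rw [codeSupport, if_pos hlt, hside (K + v) (by rw [hD, Arc]; omega)] at h
      exact add_left_cancel h
    have hhi : ∑ j ∈ Icc v K, x j = ∑ j ∈ Icc v K, x' j := by
      rcases eq_or_lt_of_le hv.1 with rfl | hlt
      · exact hsum
      have h := packet_eq_of_code_eq hxx' (k := 2 * K - v) (by omega) (by omega)
      rw [codeSupport, if_neg (by omega), show 2 * K - (2 * K - v) = v by omega,
        hside (K + (2 * K - v)) (by rw [hD, Arc]; omega)] at h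
      exact add_left_cancel h
    refine eq_of_sum_eq_of_inter_eq_singleton ?_ hlo hhi ?_
    · ext j; simp only [mem_inter, mem_Icc, mem_singleton]; omega
    · convert hsum using 2 <;> ext j <;> simp only [mem_union, mem_Icc] <;> omega
  · have h := packet_eq_of_code_eq hxx' (k := v - K) (by omega) (by omega)
    rw [show K + (v - K) = v by omega, sum_eq_sum_of_eqOn_sdiff (codeSupport_subset (by omega))
      hsum fun j hj => hside j ?_] at h
    · exact add_right_cancel h
    · simpa [show K + (v - K) = v by omega] using
        mem_arcs_of_mem_sdiff_codeSupport hD (k := v - K) (mem_Icc.2 ⟨by omega, by omega⟩) hj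

end GICFamily

theorem stmt19_general (K : ℕ) (hK : 2 ≤ K) (D : Digr ℕ)
    (hverts : D.verts = Finset.Icc 1 (3 * K - 2))
    (harcs : ∀ a : ℕ × ℕ, a ∈ D.arcs ↔
      ((a.1 = 1 ∧ a.2 = K + 1) ∨
       (a.1 = K ∧ a.2 = 2 * K) ∨
       (∃ i, 2 ≤ i ∧ i ≤ K - 1 ∧ a.1 = i ∧ (a.2 = K + i ∨ a.2 = 3 * K - i)) ∨
       (a.1 = K + 1 ∧ 2 ≤ a.2 ∧ a.2 ≤ K) ∨
       (a.1 = 2 * K ∧ 1 ≤ a.2 ∧ a.2 ≤ K - 1) ∨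
       (∃ i, 2 ≤ i ∧ i ≤ K - 1 ∧ a.1 = K + i ∧ i + 1 ≤ a.2 ∧ a.2 ≤ K) ∨
       (∃ i, 2 ≤ i ∧ i ≤ K - 1 ∧ a.1 = 3 * K - i ∧ 1 ≤ a.2 ∧ a.2 ≤ i - 1)))
    (t : ℕ) :
    (Finset.Icc 1 K).card = K ∧
    (∃ T : ℕ → Digr ℕ, D.IsGIC (Finset.Icc 1 K) T) ∧
    2 * K - 1 = (2 * (3 * K - 2) + 1) / 3 ∧
    (∃ F : (ℕ → Fin t → ZMod 2) → (Fin (2 * K - 1) → Fin t → ZMod 2),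
      IsValidCode D F) := by
  have hD := GICFamily.mem_arcs_iff hK harcs
  exact ⟨by simp, ⟨_, GICFamily.isGIC hK hD hverts⟩, by omega,
    ⟨_, GICFamily.isValidCode_code hK hD hverts⟩⟩

/-- For every `K ≥ 2`, the digraph on vertices `{1, …, 3K−2}` with inner vertex set
`V_I = {1, …, K}` and the explicitly listed arcs is a `K`-GIC digraph, and hence for every
`t ≥ 1` there is a valid index code for it of length `2K − 1 = (2N+1)/3` packets,
where `N = 3K−2`. -/
theorem stmt19 (K : ℕ) (hK : 2 ≤ K) (D : Digr ℕ)
    (hverts : D.verts = Finset.Icc 1 (3 * K - 2))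
    (harcs : ∀ a : ℕ × ℕ, a ∈ D.arcs ↔
      ((a.1 = 1 ∧ a.2 = K + 1) ∨
       (a.1 = K ∧ a.2 = 2 * K) ∨
       (∃ i, 2 ≤ i ∧ i ≤ K - 1 ∧ a.1 = i ∧ (a.2 = K + i ∨ a.2 = 3 * K - i)) ∨
       (a.1 = K + 1 ∧ 2 ≤ a.2 ∧ a.2 ≤ K) ∨
       (a.1 = 2 * K ∧ 1 ≤ a.2 ∧ a.2 ≤ K - 1) ∨
       (∃ i, 2 ≤ i ∧ i ≤ K - 1 ∧ a.1 = K + i ∧ i + 1 ≤ a.2 ∧ a.2 ≤ K) ∨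
       (∃ i, 2 ≤ i ∧ i ≤ K - 1 ∧ a.1 = 3 * K - i ∧ 1 ≤ a.2 ∧ a.2 ≤ i - 1)))
    (t : ℕ) (ht : 1 ≤ t) :
    (Finset.Icc 1 K).card = K ∧
    (∃ T : ℕ → Digr ℕ, D.IsGIC (Finset.Icc 1 K) T) ∧
    2 * K - 1 = (2 * (3 * K - 2) + 1) / 3 ∧
    (∃ F : (ℕ → Fin t → ZMod 2) → (Fin (2 * K - 1) → Fin t → ZMod 2),
      IsValidCode D F) :=
  stmt19_general K hK D hverts harcs t
end
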